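/- arXiv:2010.07104 — 7 statements merged into one kernel-verified Lean document; each statement's English description precedes it below -/
import Mathlib

section
/- Let w = (w_1,...,w_n) be pairwise distinct reals satisfying both: (1) i < j and w_i > w_j implies w is strictly decreasing on [i,j]; and (2) i < j, w_i < w_j, w_j > w_{j+1} > w_{j+2} implies w is strictly decreasing on [j,n]. Then there exist no indices ℓ_1 < ℓ_2 < ℓ_3 and m_1 < m_2 < m_3 such that w_{ℓ_1} > w_{m_1}, w_{ℓ_1} > w_{m_2}, w_{ℓ_1} > w_{m_3}, w_{ℓ_2} > w_{m_1}, w_{ℓ_2} > w_{m_3}, w_{ℓ_3} > w_{m_1}, w_{ℓ_3} > w_{m_2}, w_{ℓ_3} > w_{m_3}, but w_{ℓ_2} ≤ w_{m_2}. -/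
/-- Chain lemma: if `w k > w (k+1)` for all `k ∈ [a, b)`, then `w p > w q`
for `a ≤ p < q ≤ b`. -/
theorem wchain (w : ℕ → ℝ) (a b : ℕ)
    (hD : ∀ k, a ≤ k → k < b → w k > w (k + 1))
    {p q : ℕ} (hp : a ≤ p) (hpq : p < q) (hq : q ≤ b) : w p > w q := by
  induction q, hpq using Nat.le_induction with
  | base => exact hD p hp (by omega)
  | succ q hq' ih => exact lt_trans (hD q (by omega) (by omega)) (ih (by omega))

/-- For distinct reals `w = (w 1, ..., w n)` satisfying the block
conditions (1) and (2), there are no indices `ℓ₁ < ℓ₂ < ℓ₃` and `m₁ < m₂ < m₃`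
realizing the 3×3 all-ones-except-(2,2) pattern of the comparison matrix. -/
theorem stmt_5 (n : ℕ) (w : ℕ → ℝ) (hinj : Function.Injective w)
    (h1 : ∀ i j : ℕ, i < j → j ≤ n → w i > w j → ∀ k, i ≤ k → k < j → w k > w (k + 1))
    (h2 : ∀ i j : ℕ, 1 ≤ i → i < j → j + 2 ≤ n → w i < w j → w j > w (j + 1) →
      w (j + 1) > w (j + 2) → ∀ k, j ≤ k → k < n → w k > w (k + 1)) :
    ¬ ∃ l₁ l₂ l₃ m₁ m₂ m₃ : ℕ,
      1 ≤ l₁ ∧ l₁ < l₂ ∧ l₂ < l₃ ∧ l₃ ≤ n ∧ 1 ≤ m₁ ∧ m₁ < m₂ ∧ m₂ < m₃ ∧ m₃ ≤ n ∧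
      w l₁ > w m₁ ∧ w l₁ > w m₂ ∧ w l₁ > w m₃ ∧
      w l₂ > w m₁ ∧ w l₂ > w m₃ ∧
      w l₃ > w m₁ ∧ w l₃ > w m₂ ∧ w l₃ > w m₃ ∧
      w l₂ ≤ w m₂ := by
  rintro ⟨l₁, l₂, l₃, m₁, m₂, m₃, h1l, h12, h23, h3n, h1m, hm12, hm23, hm3n,
    a11, a12, a13, a21, a23, a31, a32, a33, hle⟩
  rcases lt_trichotomy l₂ m₂ with hlt | heq | hgt
  · -- Case l₂ < m₂ : decreasing on [l₂, m₃] gives w l₂ > w m₂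
    have hD := h1 l₂ m₃ (by omega) hm3n a23
    exact absurd (wchain w l₂ m₃ hD le_rfl hlt (by omega)) (not_lt.2 hle)
  · -- Case l₂ = m₂
    subst heq
    have hDa := h1 l₁ l₂ h12 (by omega) a12
    have hDb := h1 l₂ m₃ hm23 hm3n a23
    have hD : ∀ k, l₁ ≤ k → k < m₃ → w k > w (k + 1) := by
      intro k hk1 hk2
      rcases lt_or_ge k l₂ with h | h
      · exact hDa k hk1 h
      · exact hDb k h hk2
    have hm1l1 : m₁ < l₁ := by
      by_contra h
      exact absurd (wchain w l₁ m₃ hD (by omega) hm12 (by omega)) (not_lt.2 a21.le)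
    have hDn := h2 m₁ l₁ h1m hm1l1 (by omega) a11
      (hD l₁ le_rfl (by omega)) (hD (l₁ + 1) (by omega) (by omega))
    exact absurd (wchain w l₁ n hDn (by omega) h23 h3n) (not_lt.2 a32.le)
  · -- Case m₂ < l₂ : strict since l₂ ≠ m₂
    have hne : l₂ ≠ m₂ := by omega
    have hstrict : w m₂ > w l₂ := lt_of_le_of_ne hle (fun h => hne (hinj h))
    have hDb := h1 m₂ l₂ hgt (by omega) hstrict
    rcases lt_trichotomy l₁ m₂ with hl | he | hg
    · have hDa := h1 l₁ m₂ hl (by omega) a12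
      have hD : ∀ k, l₁ ≤ k → k < l₂ → w k > w (k + 1) := by
        intro k hk1 hk2
        rcases lt_or_ge k m₂ with h | h
        · exact hDa k hk1 h
        · exact hDb k h hk2
      have hm1l1 : m₁ < l₁ := by
        by_contra h
        exact absurd (wchain w l₁ l₂ hD (by omega) (by omega) le_rfl) (not_lt.2 a21.le)
      have hDn := h2 m₁ l₁ h1m hm1l1 (by omega) a11
        (hD l₁ le_rfl (by omega)) (hD (l₁ + 1) (by omega) (by omega))
      exact absurd (wchain w l₁ n hDn (by omega) (by omega) h3n) (not_lt.2 a32.le)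
    · exact absurd a12 (by rw [he]; exact lt_irrefl _)
    · exact absurd (wchain w m₂ l₂ hDb le_rfl hg (by omega)) (not_lt.2 a12.le)
end

section
/- Let w satisfy the block condition (i < j and w_i > w_j implies w strictly decreasing on [i,j]), and suppose indices ℓ_1 < ℓ_2 < ℓ_3, m_1 < m_2 < m_3 satisfy w_{ℓ_3} > w_{ℓ_1} > w_{m_2} ≥ w_{ℓ_2} > w_{m_3} > w_{m_1}. Then the interleaving m_1 < ℓ_1 < ℓ_2 < m_3 < ℓ_3 holds. -/
lemma step_dec (w : ℕ → ℝ) : ∀ b a : ℕ, a < b →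
    (∀ k, a ≤ k → k < b → w k > w (k + 1)) → w a > w b := by
  intro b
  induction b with
  | zero => intro a h; omega
  | succ n ih =>
    intro a h hs
    rcases Nat.lt_or_ge a n with h' | h'
    · exact lt_trans (hs n (by omega) (by omega)) (ih a h' (fun k hk hk' => hs k hk (by omega)))
    · have : a = n := by omega
      subst this
      exact hs a le_rfl (by omega)

/-- Under the block condition, if `ℓ₁ < ℓ₂ < ℓ₃`, `m₁ < m₂ < m₃` and
`w ℓ₃ > w ℓ₁ > w m₂ ≥ w ℓ₂ > w m₃ > w m₁`, then the positions interleave as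
`m₁ < ℓ₁ < ℓ₂ < m₃ < ℓ₃`. -/
theorem stmt_6 (w : ℕ → ℝ) (hinj : Function.Injective w)
    (hblock : ∀ i j : ℕ, i < j → w i > w j → ∀ k, i ≤ k → k < j → w k > w (k + 1))
    (l₁ l₂ l₃ m₁ m₂ m₃ : ℕ) (hl : l₁ < l₂ ∧ l₂ < l₃) (hm : m₁ < m₂ ∧ m₂ < m₃)
    (h1 : w l₃ > w l₁) (h2 : w l₁ > w m₂) (h3 : w m₂ ≥ w l₂)
    (h4 : w l₂ > w m₃) (h5 : w m₃ > w m₁) :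
    m₁ < l₁ ∧ l₁ < l₂ ∧ l₂ < m₃ ∧ m₃ < l₃ := by
  obtain ⟨hl12, hl23⟩ := hl
  obtain ⟨hm12, hm23⟩ := hm
  -- a general decreasing lemma on blocks
  have dec : ∀ i j a b : ℕ, i ≤ a → a < b → b ≤ j → i < j → w i > w j → w a > w b := by
    intro i j a b hia hab hbj hij hw
    exact step_dec w b a hab (fun k hk hk' => hblock i j hij hw k (by omega) (by omega))
  -- m₁ < l₁
  have hm1l1 : m₁ < l₁ := by
    by_contra hc
    push_neg at hc  -- l₁ ≤ m₁
    have hlt : l₁ < m₂ := lt_of_le_of_lt hc hm12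
    have : w m₁ > w m₂ := by
      rcases Nat.lt_or_ge l₁ m₁ with h' | h'
      · exact dec l₁ m₂ m₁ m₂ (le_of_lt h') hm12 le_rfl hlt h2
      · have : l₁ = m₁ := by omega
        subst this
        exact h2
    linarith
  -- l₂ < m₃
  have hl2m3 : l₂ < m₃ := by
    by_contra hc
    push_neg at hc  -- m₃ ≤ l₂
    have hm2l2 : m₂ < l₂ := lt_of_lt_of_le hm23 hc
    have hne : w m₂ ≠ w l₂ := fun h => by
      have := hinj h; omega
    have hstrict : w m₂ > w l₂ := lt_of_le_of_ne h3 (Ne.symm hne)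
    have : w m₃ > w l₂ := by
      rcases Nat.lt_or_ge m₃ l₂ with h' | h'
      · exact dec m₂ l₂ m₃ l₂ (le_of_lt hm23) h' le_rfl hm2l2 hstrict
      · have : m₃ = l₂ := by omega
        subst this
        exact absurd h4 (lt_irrefl _)
    linarith
  -- m₃ < l₃
  have hm3l3 : m₃ < l₃ := by
    by_contra hc
    push_neg at hc  -- l₃ ≤ m₃
    have hl2m3' : l₂ < m₃ := hl2m3
    have : w l₂ > w l₃ := by
      rcases Nat.lt_or_ge l₃ m₃ with h' | h'
      · exact dec l₂ m₃ l₂ l₃ le_rfl hl23 (le_of_lt h') hl2m3' h4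
      · have : l₃ = m₃ := by omega
        subst this
        exact h4
    linarith
  exact ⟨hm1l1, hl12, hl2m3, hm3l3⟩
end

section
/- Let w be a weight vector satisfying the block condition (i < j and w_i > w_j implies strict decrease on [i,j]). Let i_1 < ... < i_r and j_1 < ... < j_r with i_1 < j_1, w_{i_1} > w_{i_2} and w_{j_1} > w_{j_2}. Define i'_k = min(i_k,j_k), j'_k = max(i_k,j_k). Then w_{i_1} > w_{i'_2} and w_{j_1} > w_{j'_2}. -/
/-- Chain lemma: stepwise strict decrease on an interval gives strict decrease. -/
lemma stmt_8_chain (w : ℕ → ℝ) (a b : ℕ)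
    (h : ∀ k, a ≤ k → k < b → w k > w (k + 1)) :
    ∀ l k, a ≤ k → k < l → l ≤ b → w k > w l := by
  intro l
  induction l with
  | zero => intro k _ hkl _; omega
  | succ n ih =>
    intro k hak hkl hlb
    rcases Nat.lt_or_ge k n with hlt | hge
    · exact lt_trans (h n (by omega) (by omega)) (ih k hak hlt (by omega))
    · have : k = n := by omega
      subst this
      exact h k hak (by omega)

/-- case (i) of Lemma 4.1: Under the block condition, for two strictly
increasing index sequences `i, j` (indexed `1, ..., r`, `r ≥ 2`) with `i 1 < j 1`,
`w (i 1) > w (i 2)` and `w (j 1) > w (j 2)`, one has `w (i 1) > w (min (i 2) (j 2))`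
and `w (j 1) > w (max (i 2) (j 2))`. -/
theorem stmt_8 (w : ℕ → ℝ) (hinj : Function.Injective w)
    (hblock : ∀ i j : ℕ, i < j → w i > w j → ∀ k, i ≤ k → k < j → w k > w (k + 1))
    (r : ℕ) (hr : 2 ≤ r) (i j : ℕ → ℕ)
    (hi : ∀ k, 1 ≤ k → k < r → i k < i (k + 1))
    (hj : ∀ k, 1 ≤ k → k < r → j k < j (k + 1))
    (h11 : i 1 < j 1) (hi12 : w (i 1) > w (i 2)) (hj12 : w (j 1) > w (j 2)) :
    w (i 1) > w (min (i 2) (j 2)) ∧ w (j 1) > w (max (i 2) (j 2)) := by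
  have hi12' : i 1 < i 2 := hi 1 le_rfl (by omega)
  have hj12' : j 1 < j 2 := hj 1 le_rfl (by omega)
  -- strict decrease of w on [i 1, i 2]
  have hdec : ∀ l k, i 1 ≤ k → k < l → l ≤ i 2 → w k > w l :=
    stmt_8_chain w (i 1) (i 2) (hblock (i 1) (i 2) hi12' hi12)
  constructor
  · rcases Nat.lt_or_ge (i 2) (j 2) with h | h
    · rw [min_eq_left (le_of_lt h)]; exact hi12
    · rw [min_eq_right h]
      rcases eq_or_lt_of_le h with heq | hlt
      · rw [heq]; exact hi12
      · exact hdec (j 2) (i 1) le_rfl (by omega) (le_of_lt hlt)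
  · rcases Nat.lt_or_ge (i 2) (j 2) with h | h
    · rw [max_eq_right (le_of_lt h)]; exact hj12
    · rw [max_eq_left h]
      rcases eq_or_lt_of_le h with heq | hlt
      · rw [← heq]; exact hj12
      · exact hdec (i 2) (j 1) (by omega) (by omega) le_rfl
end

section
/- Let w satisfy the block condition. Let i_1 < ... < i_r and j_1 < ... < j_r with w_{i_1} > w_{i_2}, w_{j_1} < w_{j_2}, i_1 < j_2, and j_3 ≤ i_2 (so r ≥ 3). Then j_1 < i_1, w_{i_1} > w_{j_2}, and w_{i_1} > w_{j_1}. -/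
/-- case (iv) of Lemma 4.1: Under the block condition, for strictly
increasing index sequences `i, j` (indexed `1, ..., r`, `r ≥ 3`) with
`w (i 1) > w (i 2)`, `w (j 1) < w (j 2)`, `i 1 < j 2` and `j 3 ≤ i 2`, one has
`j 1 < i 1`, `w (i 1) > w (j 2)` and `w (i 1) > w (j 1)`. -/
theorem stmt_9 (w : ℕ → ℝ) (hinj : Function.Injective w)
    (hblock : ∀ i j : ℕ, i < j → w i > w j → ∀ k, i ≤ k → k < j → w k > w (k + 1))
    (r : ℕ) (hr : 3 ≤ r) (i j : ℕ → ℕ)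
    (hi : ∀ k, 1 ≤ k → k < r → i k < i (k + 1))
    (hj : ∀ k, 1 ≤ k → k < r → j k < j (k + 1))
    (hi12 : w (i 1) > w (i 2)) (hj12 : w (j 1) < w (j 2))
    (h1 : i 1 < j 2) (h2 : j 3 ≤ i 2) :
    j 1 < i 1 ∧ w (i 1) > w (j 2) ∧ w (i 1) > w (j 1) := by
  have hii : i 1 < i 2 := hi 1 le_rfl (by omega)
  have step : ∀ k, i 1 ≤ k → k < i 2 → w k > w (k + 1) := hblock _ _ hii hi12
  have dec : ∀ b a, i 1 ≤ a → a < b → b ≤ i 2 → w a > w b := by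
    intro b
    induction b with
    | zero => omega
    | succ n ih =>
      intro a ha hab hb
      rcases Nat.lt_succ_iff_lt_or_eq.mp hab with h | h
      · exact lt_trans (step n (by omega) (by omega)) (ih a ha h (by omega))
      · subst h; exact step a ha (by omega)
  have hj23 : j 2 < j 3 := hj 2 (by omega) (by omega)
  have hj12' : j 1 < j 2 := hj 1 le_rfl (by omega)
  have hw12 : w (i 1) > w (j 2) := dec (j 2) (i 1) le_rfl h1 (by omega)
  have hji : j 1 < i 1 := by
    by_contra h
    push_neg at h
    exact absurd (dec (j 2) (j 1) h hj12' (by omega)) (not_lt.mpr hj12.le)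
  exact ⟨hji, hw12, lt_trans hj12 hw12⟩
end

section
/- Let w = (w_1,...,w_n) be distinct reals satisfying the block condition, and let A be the n×n 0-1 matrix with A_{ij} = 1 iff w_i > w_j. Then any 3×3 submatrix of A (with strictly increasing row indices ℓ_1 < ℓ_2 < ℓ_3 and column indices m_1 < m_2 < m_3) that corresponds to a 6-cycle pattern (each row and each column containing exactly two 1s arranged cyclically) contains at most one zero entry. -/
/-- Under the block condition, any 3×3 submatrix of the comparison
matrix `A i j = [w i > w j]` (rows `ℓ` strictly increasing, columns `m` strictly
increasing) whose six entries off a permutation pattern `σ` are all 1 (a 6-cycle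
pattern) has at most one 0 among the three permutation positions. -/
theorem stmt_12 (w : ℕ → ℝ) (hinj : Function.Injective w)
    (hblock : ∀ i j : ℕ, i < j → w i > w j → ∀ k, i ≤ k → k < j → w k > w (k + 1))
    (ℓ m : Fin 3 → ℕ) (hℓ : StrictMono ℓ) (hm : StrictMono m)
    (σ : Equiv.Perm (Fin 3))
    (hones : ∀ a b : Fin 3, b ≠ σ a → w (ℓ a) > w (m b)) :
    ∀ a b : Fin 3, ¬ (w (ℓ a) > w (m (σ a))) → ¬ (w (ℓ b) > w (m (σ b))) → a = b := by
  intro a b ha hb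
  by_contra hne
  have h1 := hones a (σ b) (fun h => hne ((σ.injective h).symm))
  have h2 := hones b (σ a) (fun h => hne (σ.injective h))
  push_neg at ha hb
  linarith
end

section
/- Let w satisfy the block condition, and suppose ℓ_1 < ℓ_2 < ℓ_3, m_1 < m_2 < m_3 satisfy w_{ℓ_1}, w_{ℓ_3} > w_{m_2} ≥ w_{ℓ_2} > w_{m_1}, w_{m_3} and w_{ℓ_2} > w_{m_1}, w_{m_3}. Then w_{ℓ_1} < w_{ℓ_3} and w_{m_1} < w_{m_3}. -/
theorem chain_decrease (w : ℕ → ℝ)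
    (hblock : ∀ i j : ℕ, i < j → w i > w j → ∀ k, i ≤ k → k < j → w k > w (k + 1))
    (i j : ℕ) (hij : i < j) (hw : w i > w j) :
    ∀ a b, i ≤ a → a < b → b ≤ j → w a > w b := by
  have step := hblock i j hij hw
  intro a b hia hab hbj
  induction b with
  | zero => omega
  | succ m ih =>
    rcases Nat.lt_succ_iff_lt_or_eq.mp hab with h | h
    · exact lt_trans (step m (by omega) (by omega)) (ih h (by omega))
    · subst h; exact step a hia (by omega)

/-- Under the block condition, if `ℓ₁ < ℓ₂ < ℓ₃`, `m₁ < m₂ < m₃`,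
`w ℓ₁ > w m₂`, `w ℓ₃ > w m₂`, `w m₂ ≥ w ℓ₂`, `w ℓ₂ > w m₁` and `w ℓ₂ > w m₃`,
then `w ℓ₁ < w ℓ₃` and `w m₁ < w m₃`. -/
theorem stmt_13 (w : ℕ → ℝ) (hinj : Function.Injective w)
    (hblock : ∀ i j : ℕ, i < j → w i > w j → ∀ k, i ≤ k → k < j → w k > w (k + 1))
    (l₁ l₂ l₃ m₁ m₂ m₃ : ℕ) (hl : l₁ < l₂ ∧ l₂ < l₃) (hm : m₁ < m₂ ∧ m₂ < m₃)
    (h1 : w l₁ > w m₂) (h2 : w l₃ > w m₂) (h3 : w m₂ ≥ w l₂)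
    (h4 : w l₂ > w m₁) (h5 : w l₂ > w m₃) :
    w l₁ < w l₃ ∧ w m₁ < w m₃ := by
  obtain ⟨hl12, hl23⟩ := hl
  obtain ⟨hm12, hm23⟩ := hm
  constructor
  · by_contra h
    push_neg at h
    rcases eq_or_lt_of_le h with heq | hlt
    · exact absurd (hinj heq) (by omega)
    · have := chain_decrease w hblock l₁ l₃ (by omega) hlt l₂ l₃ (le_of_lt hl12) hl23 le_rfl
      linarith
  · by_contra h
    push_neg at h
    rcases eq_or_lt_of_le h with heq | hlt
    · exact absurd (hinj heq) (by omega)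
    · have := chain_decrease w hblock m₁ m₃ (by omega) hlt m₁ m₂ le_rfl hm12 (le_of_lt hm23)
      linarith
end

section
/- Let w be distinct reals satisfying the block condition and condition (2) (interior blocks of size at most 2). Then the bipartite graph G on {u_1,...,u_n} ⊔ {v_1,...,v_n} with edges {u_i, v_j} for w_i > w_j contains no 6-cycle (u_{ℓ_1}, v_{m_1}, u_{ℓ_2}, v_{m_3}, u_{ℓ_3}, v_{m_2}) with ℓ_1 < ℓ_2 < ℓ_3 and m_1 < m_2 < m_3 whose only missing chord-pair position is (ℓ_2, m_2), i.e., such that all of {u_{ℓ_a}, v_{m_b}} for (a,b) ≠ (2,2) are edges but {u_{ℓ_2}, v_{m_2}} is not. -/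
/-- If `w` is strictly decreasing step-by-step on `[i, j]`, then `w a > w b` for
`i ≤ a < b ≤ j`. -/
lemma chain_dec {w : ℕ → ℝ} {i j : ℕ} (h : ∀ k, i ≤ k → k < j → w k > w (k + 1))
    {a b : ℕ} (ha : i ≤ a) (hab : a < b) (hb : b ≤ j) : w a > w b := by
  induction b with
  | zero => omega
  | succ b ih =>
    rcases Nat.lt_or_ge a b with hab' | hab'
    · exact lt_trans (h b (by omega) (by omega)) (ih hab' (by omega))
    · have : a = b := by omega
      subst this
      exact h a ha (by omega)

/-- For distinct reals `w` satisfying block conditions (1) and (2),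
the bipartite graph with edges `{u_i, v_j}` for `w i > w j` contains no 6-cycle on
rows `ℓ₁ < ℓ₂ < ℓ₃` and columns `m₁ < m₂ < m₃` such that all pairs `(ℓ_a, m_b)` with
`(a, b) ≠ (2, 2)` are edges but `(ℓ₂, m₂)` is not. -/
theorem stmt_19 (n : ℕ) (w : ℕ → ℝ) (hinj : Function.Injective w)
    (h1 : ∀ i j : ℕ, i < j → j ≤ n → w i > w j → ∀ k, i ≤ k → k < j → w k > w (k + 1))
    (h2 : ∀ i j : ℕ, 1 ≤ i → i < j → j + 2 ≤ n → w i < w j → w j > w (j + 1) →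
      w (j + 1) > w (j + 2) → ∀ k, j ≤ k → k < n → w k > w (k + 1)) :
    ¬ ∃ l₁ l₂ l₃ m₁ m₂ m₃ : ℕ,
      1 ≤ l₁ ∧ l₁ < l₂ ∧ l₂ < l₃ ∧ l₃ ≤ n ∧ 1 ≤ m₁ ∧ m₁ < m₂ ∧ m₂ < m₃ ∧ m₃ ≤ n ∧
      w l₁ > w m₁ ∧ w l₁ > w m₂ ∧ w l₁ > w m₃ ∧
      w l₂ > w m₁ ∧ w l₂ > w m₃ ∧
      w l₃ > w m₁ ∧ w l₃ > w m₂ ∧ w l₃ > w m₃ ∧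
      ¬ (w l₂ > w m₂) := by
  rintro ⟨l₁, l₂, l₃, m₁, m₂, m₃, hl₁, hl12, hl23, hl3n, hm₁, hm12, hm23, hm3n,
    h11, h12, h13, h21, h23, h31, h32, h33, hne⟩
  have hle : w l₂ ≤ w m₂ := not_lt.mp hne
  -- Case A : l₂ < m₂
  rcases Nat.lt_or_ge l₂ m₂ with hA | hB
  · -- w l₂ > w m₃ gives strict decrease on [l₂, m₃], so w l₂ > w m₂, contradiction
    have hdec := h1 l₂ m₃ (by omega) hm3n h23
    exact absurd (chain_dec hdec (le_refl l₂) hA (by omega)) (not_lt.mpr hle)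
  · -- l₂ ≥ m₂
    have hm1l2 : w m₁ < w m₂ := lt_of_lt_of_le h21 hle
    have hm2m3 : w m₂ > w m₃ := lt_of_lt_of_le h23 hle
    have hdec23 := h1 m₂ m₃ hm23 hm3n hm2m3
    rcases Nat.lt_or_ge (m₂ + 1) m₃ with hB1 | hB2
    · -- m₃ ≥ m₂ + 2 : apply h2 at (m₁, m₂), get decrease on [m₂, n]
      have hdecn := h2 m₁ m₂ hm₁ hm12 (by omega) hm1l2
        (hdec23 m₂ (le_refl _) hm23) (hdec23 (m₂ + 1) (by omega) hB1)
      exact absurd (chain_dec hdecn (le_refl m₂) (by omega) hl3n) (not_lt.mpr (le_of_lt h32))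
    · -- m₃ = m₂ + 1
      have hm3eq : m₃ = m₂ + 1 := by omega
      rcases Nat.lt_or_ge m₂ l₂ with hB2a | hB2b
      · -- m₂ < l₂
        have hlt : w m₂ > w l₂ := lt_of_le_of_ne hle
          (fun h => by have := hinj h; omega)
        have hl2m3 : l₂ ≠ m₃ := fun h => by rw [h] at h23; exact lt_irrefl _ h23
        have hl2big : m₂ + 2 ≤ l₂ := by omega
        have hdecl := h1 m₂ l₂ hB2a (by omega) hlt
        have hdecn := h2 m₁ m₂ hm₁ hm12 (by omega) hm1l2
          (hdecl m₂ (le_refl _) (by omega)) (hdecl (m₂ + 1) (by omega) (by omega))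
        exact absurd (chain_dec hdecn (le_refl m₂) (by omega) hl3n) (not_lt.mpr (le_of_lt h32))
      · -- l₂ = m₂, m₃ = m₂ + 1
        have hl2eq : l₂ = m₂ := by omega
        -- w l₁ > w m₃ gives strict decrease on [l₁, l₂ + 1]
        have hdecl := h1 l₁ m₃ (by omega) hm3n h13
        rcases Nat.lt_trichotomy m₁ l₁ with hc | hc | hc
        · -- m₁ < l₁ : apply h2 at (m₁, l₁), decrease on [l₁, n], so w l₂ > w l₃
          have hdecn := h2 m₁ l₁ hm₁ hc (by omega) h11
            (hdecl l₁ (le_refl _) (by omega)) (hdecl (l₁ + 1) (by omega) (by omega))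
          have : w l₂ > w l₃ := chain_dec hdecn (le_of_lt hl12) hl23 hl3n
          rw [hl2eq] at this
          exact absurd h32 (not_lt.mpr (le_of_lt this))
        · rw [hc] at h11; exact lt_irrefl _ h11
        · -- l₁ < m₁ < m₂ = l₂ ≤ m₃ : decrease on [l₁, m₃] gives w m₁ > w l₂
          have : w m₁ > w l₂ := chain_dec hdecl (le_of_lt hc) (by omega) (by omega)
          exact absurd h21 (not_lt.mpr (le_of_lt this))
end
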